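/- For v ∈ [0, 1/8] and the TP-cell distribution (α, β, γ, δ) = (1 − 8v, v, 3v, 4v), the potency of the experiment measuring p = P(y_x) equals v. That is, (α + δ) − max_{p ∈ [1−8v, 1−v]} W(p) = v, where W is the piecewise width function: W(p) = p on [1−8v, 1−5v], W(p) = 1−5v on [1−5v, 1−4v], W(p) = (2−9v) − p on [1−4v, 1−v]. -/

import Mathlib

open Set

theorem isGreatest_image_trapezoid {a b c d : ℝ} (hab : a ≤ b) (hbd : b ≤ d) {W : ℝ → ℝ}
    (hrise : ∀ p ∈ Icc a b, W p = p) (hflat : ∀ p ∈ Icc b c, W p = b)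
    (hfall : ∀ p ∈ Icc c d, W p = (b + c) - p) :
    IsGreatest (W '' Icc a d) b := by
  refine ⟨⟨b, ⟨hab, hbd⟩, hrise b ⟨hab, le_rfl⟩⟩, ?_⟩
  rintro _ ⟨p, ⟨hap, hpd⟩, rfl⟩
  rcases le_or_gt p b with hpb | hbp
  · rw [hrise p ⟨hap, hpb⟩]; exact hpb
  rcases le_or_gt p c with hpc | hcp
  · rw [hflat p ⟨hbp.le, hpc⟩]
  · rw [hfall p ⟨hcp.le, hpd⟩]; linarith

/-- Constructive achievability: for the TP-cell distribution
`(α, β, γ, δ) = (1-8v, v, 3v, 4v)`, the potency of the experiment measuring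
`p = P(y_x)` equals `v`: `(α + δ) - max_{p ∈ [1-8v,1-v]} W(p) = v`. -/
theorem tp_cell_potency (v : ℝ) (hv : v ∈ Set.Icc (0 : ℝ) (1/8))
    (W : ℝ → ℝ)
    (h1 : ∀ p ∈ Set.Icc (1 - 8*v) (1 - 5*v), W p = p)
    (h2 : ∀ p ∈ Set.Icc (1 - 5*v) (1 - 4*v), W p = 1 - 5*v)
    (h3 : ∀ p ∈ Set.Icc (1 - 4*v) (1 - v), W p = (2 - 9*v) - p) :
    ((1 - 8*v) + 4*v) - sSup (W '' Set.Icc (1 - 8*v) (1 - v)) = v := by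
  have hfall : ∀ p ∈ Icc (1 - 4*v) (1 - v), W p = ((1 - 5*v) + (1 - 4*v)) - p := fun p hp => by
    rw [h3 p hp]; ring
  have hmax : IsGreatest (W '' Icc (1 - 8*v) (1 - v)) (1 - 5*v) :=
    isGreatest_image_trapezoid (by linarith [hv.1]) (by linarith [hv.1]) h1 h2 hfall
  rw [hmax.csSup_eq]
  ring
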